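/- Let g : {0,1}^n → ℝ^n be monotone increasing, u ∈ ℝ̄^n, and suppose E(u) = y with y_k = 1 and u_k = −∞. Let t = g(E(u[k:=+∞]))_k and let x ∈ ℝ̄ with x ≤ t. Then E(u[k:=x]) = y. -/

import Mathlib

/-!
Write `w = E(u[k:=x])`. Since `E` is antitone in the thresholds and `u ≤ u[k:=x]`, `w ≤ y`.
If `w_k = 0`, then `w` is also a fixed point of `G_{u[k:=+∞]}`, so by minimality
`E(u[k:=+∞]) ≤ w`; monotonicity of `g` gives `x ≤ t ≤ g(w)_k`, and then `G_{u[k:=x]}` switches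
coordinate `k` of `w` on, a contradiction. Hence `w_k = 1`, so `w` is a fixed point of `G_u`
(the threshold `u_k = −∞` always switches `k` on), and minimality gives `y ≤ w`.

That `E(u)` is a fixed point at all rests on Kleene iteration: `n` steps from `0` suffice because every
non-stationary step switches on at least one more of the `n` coordinates.
-/

open Function

/-- Best-response map: `G_u(y) i = 𝟙(g(y)_i ≥ u_i)`, comparisons in the extended reals. -/
noncomputable def Gmap {n : ℕ} (g : (Fin n → Bool) → Fin n → ℝ) (u : Fin n → EReal)
    (y : Fin n → Bool) : Fin n → Bool :=
  fun i => decide (u i ≤ ((g y i : ℝ) : EReal))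

/-- Minimal equilibrium: `E(u) = (G_u)^[n](0)`. -/
noncomputable def Emin {n : ℕ} (g : (Fin n → Bool) → Fin n → ℝ) (u : Fin n → EReal) : Fin n → Bool :=
  (Gmap g u)^[n] (fun _ => false)

section Iterate

variable {α : Type*} [PartialOrder α] {f : α → α}

theorem StrictMono.isFixedPt_or_lt_map {c : α → ℕ} (hc : StrictMono c) {a : α} (ha : a ≤ f a) :
    IsFixedPt f a ∨ c a < c (f a) :=
  ha.eq_or_lt.imp Eq.symm (@hc _ _)

theorem Monotone.isFixedPt_iterate_of_strictMono (hf : Monotone f) {x : α} (hx : x ≤ f x)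
    {c : α → ℕ} (hc : StrictMono c) {N : ℕ} (hN : ∀ a, c a ≤ c x + N) :
    IsFixedPt f (f^[N] x) := by
  have hchain : Monotone fun m => f^[m] x := hf.monotone_iterate_of_le_map hx
  have step (m : ℕ) : IsFixedPt f (f^[m] x) ∨ c (f^[m] x) < c (f^[m + 1] x) := by
    rw [iterate_succ_apply']
    exact hc.isFixedPt_or_lt_map (by simpa only [iterate_succ_apply'] using hchain m.le_succ)
  have rise (m : ℕ) : IsFixedPt f (f^[m] x) ∨ c x + m < c (f^[m + 1] x) := by
    induction m with
    | zero => simpa using step 0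
    | succ m ih =>
      rcases ih with hfix | hlt
      · left
        rw [iterate_succ_apply']
        exact hfix.apply
      · exact (step (m + 1)).imp_right (by omega)
  exact (rise N).resolve_right fun h => (hN _).not_gt (by omega)

end Iterate

theorem strictMono_sum_toNat {ι : Type*} [Fintype ι] :
    StrictMono fun a : ι → Bool => ∑ i, (a i).toNat := by
  intro a b hab
  obtain ⟨hle, i, hi⟩ := Pi.lt_def.mp hab
  refine Finset.sum_lt_sum (fun j _ => Bool.toNat_le_toNat (hle j)) ⟨i, Finset.mem_univ i, ?_⟩
  revert hi
  cases a i <;> cases b i <;> decide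

theorem Monotone.isFixedPt_iterate_card_bot {ι : Type*} [Fintype ι] {f : (ι → Bool) → ι → Bool}
    (hf : Monotone f) : IsFixedPt f (f^[Fintype.card ι] ⊥) :=
  hf.isFixedPt_iterate_of_strictMono bot_le strictMono_sum_toNat fun a => by
    have h := Finset.sum_le_card_nsmul Finset.univ _ 1 fun i _ => Bool.toNat_le (a i)
    rw [Finset.card_univ, smul_eq_mul, mul_one] at h
    simpa using h

section Equilibrium

variable {n : ℕ} {g : (Fin n → Bool) → Fin n → ℝ}

theorem Gmap_monotone (hg : Monotone g) (u : Fin n → EReal) : Monotone (Gmap g u) := by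
  intro y y' hyy' i
  simp only [Gmap, Bool.le_iff_imp, decide_eq_true_eq]
  exact fun h => h.trans (EReal.coe_le_coe_iff.mpr (hg hyy' i))

theorem Gmap_antitone : Antitone (Gmap g) := by
  intro u u' huu' y i
  simp only [Gmap, Bool.le_iff_imp, decide_eq_true_eq]
  exact (huu' i).trans

theorem Gmap_update_self (u : Fin n → EReal) (k : Fin n) (a : EReal) (y : Fin n → Bool) :
    Gmap g (update u k a) y k = decide (a ≤ ((g y k : ℝ) : EReal)) := by
  simp [Gmap]

theorem isFixedPt_Gmap_update {u : Fin n → EReal} {p : Fin n → Bool} (hp : IsFixedPt (Gmap g u) p)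
    {k : Fin n} {a : EReal} (hk : Gmap g (update u k a) p k = p k) :
    IsFixedPt (Gmap g (update u k a)) p := by
  funext i
  rcases eq_or_ne i k with rfl | hi
  · exact hk
  · simpa only [Gmap, update_of_ne hi] using congrFun hp i

theorem isFixedPt_Emin (hg : Monotone g) (u : Fin n → EReal) :
    IsFixedPt (Gmap g u) (Emin g u) := by
  have h := (Gmap_monotone hg u).isFixedPt_iterate_card_bot
  rwa [Fintype.card_fin] at h

theorem Emin_le_of_isFixedPt (hg : Monotone g) {u : Fin n → EReal} {p : Fin n → Bool}
    (hp : IsFixedPt (Gmap g u) p) : Emin g u ≤ p :=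
  ((Gmap_monotone hg u).iterate n bot_le).trans_eq (iterate_fixed hp n)

theorem Emin_antitone (hg : Monotone g) : Antitone (Emin g) := fun _ _ huu' =>
  (Gmap_monotone hg _).iterate_le_of_le (Gmap_antitone huu') n _

end Equilibrium

theorem Emin_update_below_threshold_general {n : ℕ} (g : (Fin n → Bool) → Fin n → ℝ)
    (hg : Monotone g) (u : Fin n → EReal) (y : Fin n → Bool) (hy : Emin g u = y)
    (k : Fin n) (huk : u k = ⊥) (x : EReal)
    (hx : x ≤ ((g (Emin g (Function.update u k ⊤)) k : ℝ) : EReal)) :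
    Emin g (Function.update u k x) = y := by
  subst hy
  set w := Emin g (update u k x)
  have hw : IsFixedPt (Gmap g (update u k x)) w := isFixedPt_Emin hg _
  have hwk : w k = true := by
    by_contra hwk
    rw [Bool.not_eq_true] at hwk
    have htop : IsFixedPt (Gmap g (update u k ⊤)) w := by
      rw [← update_idem (a := k) x]
      exact isFixedPt_Gmap_update hw (by simp [Gmap_update_self, hwk])
    have hxw : x ≤ ((g w k : ℝ) : EReal) :=
      hx.trans (EReal.coe_le_coe_iff.mpr (hg (Emin_le_of_isFixedPt hg htop) k))
    have hwk' := congrFun hw k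
    simp [Gmap_update_self, hxw, hwk] at hwk'
  have hbot : IsFixedPt (Gmap g u) w := by
    have hu : update (update u k x) k ⊥ = u := by rw [update_idem, ← huk, update_eq_self]
    rw [← hu]
    exact isFixedPt_Gmap_update hw (by simp [Gmap_update_self, hwk])
  have hle : u ≤ update u k x := le_update_iff.mpr ⟨huk ▸ bot_le, fun _ _ => le_rfl⟩
  exact le_antisymm (Emin_antitone hg hle) (Emin_le_of_isFixedPt hg hbot)

/-- Induction step (acting coordinate): if `E(u) = y`, `y_k = 1` and `u_k = −∞`, then
replacing `u_k` by any `x` below the threshold `t = g(E(u[k:=+∞]))_k` preserves the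
minimal equilibrium. -/
theorem Emin_update_below_threshold {n : ℕ} (g : (Fin n → Bool) → Fin n → ℝ)
    (hg : Monotone g) (u : Fin n → EReal) (y : Fin n → Bool) (hy : Emin g u = y)
    (k : Fin n) (hk : y k = true) (huk : u k = ⊥) (x : EReal)
    (hx : x ≤ ((g (Emin g (Function.update u k ⊤)) k : ℝ) : EReal)) :
    Emin g (Function.update u k x) = y :=
  Emin_update_below_threshold_general g hg u y hy k huk x hx
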